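/- arXiv:2410.13965 — 3 statements merged into one kernel-verified Lean document; each statement's English description precedes it below -/
import Mathlib

section
/- Let φ : 𝔻 → 𝔻 be holomorphic, w ∈ 𝔻, and δ := 1 - D_h φ(w). Then for every z ∈ 𝔻, e^{-k(z,w)} sinh(k(z,w)) · δ ≤ k(z,w) - k(φ(z),φ(w)) ≤ e^{k(z,w)} sinh(k(z,w)) · δ, where k denotes the hyperbolic distance on 𝔻. -/
open Metric Set

noncomputable def Dh (φ : ℂ → ℂ) (z : ℂ) : ℝ :=
  (1 - ‖z‖ ^ 2) * ‖deriv φ z‖ / (1 - ‖φ z‖ ^ 2)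

/-- Pseudo-hyperbolic distance on the unit disk. -/
noncomputable def pdist (z w : ℂ) : ℝ :=
  ‖(z - w) / (1 - (starRingEnd ℂ) w * z)‖

/-- Hyperbolic distance on the unit disk. -/
noncomputable def hdist (z w : ℂ) : ℝ :=
  Real.log ((1 + pdist z w) / (1 - pdist z w))

/-!
Composing with the disc automorphisms `mobius w` and `mobius (φ w)` gives a holomorphic self-map
`ψ` of the disc with `ψ 0 = 0` and `‖ψ' 0‖ = D_h φ(w)`; for `u = mobius w z` we get
`ρ(z, w) = ‖u‖` and `ρ(φ z, φ w) = ‖u‖ ‖g u‖`, where `g = ψ(u)/u`. By the Schwarz lemma `g` maps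
the disc into the closed disc, and the Schwarz lemma applied to `mobius (g 0) ∘ g` (or the maximum
principle, if `g` is a unimodular constant) gives `|‖g u‖ - ‖g 0‖| ≤ ‖u‖ (1 - ‖g u‖ ‖g 0‖)`.
Writing `ρ = ‖u‖` and `k = log ((1 + ρ) / (1 - ρ))`, we have `e^{∓k} sinh k = 2ρ / (1 ± ρ)²`, and
both bounds follow from `1 - 1/Y ≤ log Y ≤ Y - 1` applied to `Y = e^{k(z,w) - k(φ z, φ w)}`.
-/

open ComplexConjugate

namespace Real

theorem exp_neg_mul_sinh_log_one_add_div_one_sub {ρ : ℝ} (h₀ : -1 < ρ) (h₁ : ρ < 1) :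
    exp (-log ((1 + ρ) / (1 - ρ))) * sinh (log ((1 + ρ) / (1 - ρ))) = 2 * ρ / (1 + ρ) ^ 2 := by
  have hX : 0 < (1 + ρ) / (1 - ρ) := div_pos (by linarith) (by linarith)
  rw [exp_neg, exp_log hX, sinh_log hX]
  field_simp [show 1 - ρ ≠ 0 by linarith, show 1 + ρ ≠ 0 by linarith]
  ring

theorem exp_mul_sinh_log_one_add_div_one_sub {ρ : ℝ} (h₀ : -1 < ρ) (h₁ : ρ < 1) :
    exp (log ((1 + ρ) / (1 - ρ))) * sinh (log ((1 + ρ) / (1 - ρ))) = 2 * ρ / (1 - ρ) ^ 2 := by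
  have hX : 0 < (1 + ρ) / (1 - ρ) := div_pos (by linarith) (by linarith)
  rw [exp_log hX, sinh_log hX]
  field_simp [show 1 - ρ ≠ 0 by linarith, show 1 + ρ ≠ 0 by linarith]
  ring

theorem two_mul_div_one_add_sq_mul_le_log_sub {ρ t c : ℝ} (hρ₀ : 0 ≤ ρ) (hρ₁ : ρ < 1)
    (ht₀ : 0 ≤ t) (ht₁ : t ≤ 1) (h : t - c ≤ ρ * (1 - t * c)) :
    2 * ρ / (1 + ρ) ^ 2 * (1 - c) ≤
      log ((1 + ρ) / (1 - ρ)) - log ((1 + t * ρ) / (1 - t * ρ)) := by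
  have hs₀ : 0 ≤ t * ρ := mul_nonneg ht₀ hρ₀
  have hs₁ : t * ρ < 1 := by nlinarith
  have hX : 0 < (1 + ρ) / (1 - ρ) := div_pos (by linarith) (by linarith)
  have hS : 0 < (1 + t * ρ) / (1 - t * ρ) := div_pos (by linarith) (by linarith)
  rw [← log_div hX.ne' hS.ne']
  calc 2 * ρ / (1 + ρ) ^ 2 * (1 - c) = 1 - (1 + 2 * c * ρ + ρ ^ 2) / (1 + ρ) ^ 2 := by
        field_simp; ring
    _ ≤ 1 - ((1 + ρ) / (1 - ρ) / ((1 + t * ρ) / (1 - t * ρ)))⁻¹ := by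
        rw [inv_div, div_div_div_eq, sub_le_sub_iff_left,
          div_le_div_iff₀ (by nlinarith) (by positivity)]
        nlinarith [mul_le_mul_of_nonneg_left h (by positivity : (0:ℝ) ≤ ρ * (1 + ρ))]
    _ ≤ log ((1 + ρ) / (1 - ρ) / ((1 + t * ρ) / (1 - t * ρ))) :=
        one_sub_inv_le_log_of_pos (div_pos hX hS)

theorem log_sub_le_two_mul_div_one_sub_sq_mul {ρ t c : ℝ} (hρ₀ : 0 ≤ ρ) (hρ₁ : ρ < 1)
    (ht₀ : 0 ≤ t) (ht₁ : t ≤ 1) (h : c - t ≤ ρ * (1 - t * c)) :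
    log ((1 + ρ) / (1 - ρ)) - log ((1 + t * ρ) / (1 - t * ρ)) ≤
      2 * ρ / (1 - ρ) ^ 2 * (1 - c) := by
  have hs₀ : 0 ≤ t * ρ := mul_nonneg ht₀ hρ₀
  have hs₁ : t * ρ < 1 := by nlinarith
  have hX : 0 < (1 + ρ) / (1 - ρ) := div_pos (by linarith) (by linarith)
  have hS : 0 < (1 + t * ρ) / (1 - t * ρ) := div_pos (by linarith) (by linarith)
  rw [← log_div hX.ne' hS.ne']
  calc log ((1 + ρ) / (1 - ρ) / ((1 + t * ρ) / (1 - t * ρ)))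
      ≤ (1 + ρ) / (1 - ρ) / ((1 + t * ρ) / (1 - t * ρ)) - 1 :=
        log_le_sub_one_of_pos (div_pos hX hS)
    _ ≤ (1 - 2 * c * ρ + ρ ^ 2) / (1 - ρ) ^ 2 - 1 := by
        rw [div_div_div_eq, sub_le_sub_iff_right,
          div_le_div_iff₀ (by nlinarith) (by nlinarith)]
        nlinarith [mul_le_mul_of_nonneg_left h (by nlinarith : (0:ℝ) ≤ ρ * (1 - ρ))]
    _ = 2 * ρ / (1 - ρ) ^ 2 * (1 - c) := by
        field_simp [show 1 - ρ ≠ 0 by linarith]; ring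

end Real

/-- The involutive automorphism of the unit disc exchanging `a` and `0`. -/
noncomputable def mobius (a z : ℂ) : ℂ := (a - z) / (1 - conj a * z)

theorem norm_one_sub_conj_mul_sq (a b : ℂ) :
    ‖1 - conj b * a‖ ^ 2 = ‖a - b‖ ^ 2 + (1 - ‖a‖ ^ 2) * (1 - ‖b‖ ^ 2) := by
  simp only [Complex.sq_norm, Complex.normSq_apply, Complex.sub_re, Complex.sub_im,
    Complex.mul_re, Complex.mul_im, Complex.one_re, Complex.one_im, Complex.conj_re,
    Complex.conj_im]
  ring

theorem norm_one_sub_conj_mul_self {a : ℂ} (ha : ‖a‖ ≤ 1) :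
    ‖1 - conj a * a‖ = 1 - ‖a‖ ^ 2 := by
  rw [Complex.conj_mul', ← Complex.ofReal_pow, ← Complex.ofReal_one, ← Complex.ofReal_sub,
    Complex.norm_real, Real.norm_of_nonneg (by nlinarith [norm_nonneg a])]

theorem one_sub_conj_mul_ne_zero {a z : ℂ} (h : ‖a‖ * ‖z‖ < 1) : 1 - conj a * z ≠ 0 := by
  intro h0
  have h1 := congrArg norm (show conj a * z = 1 by linear_combination -h0)
  rw [norm_mul, Complex.norm_conj, norm_one] at h1
  exact h.ne h1

theorem one_sub_conj_mul_ne_zero_of_mem_ball {a z : ℂ} (ha : a ∈ ball (0 : ℂ) 1)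
    (hz : z ∈ ball (0 : ℂ) 1) : 1 - conj a * z ≠ 0 := by
  rw [mem_ball_zero_iff] at ha hz
  exact one_sub_conj_mul_ne_zero (by nlinarith [norm_nonneg a, norm_nonneg z])

theorem mobius_zero_right (a : ℂ) : mobius a 0 = a := by simp [mobius]

theorem mobius_self (a : ℂ) : mobius a a = 0 := by simp [mobius]

theorem pdist_eq_norm_mobius (z w : ℂ) : pdist z w = ‖mobius w z‖ := by
  rw [pdist, mobius, norm_div, norm_div, norm_sub_rev]

theorem pdist_self (a : ℂ) : pdist a a = 0 := by simp [pdist]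

theorem mobius_mem_ball {a z : ℂ} (ha : a ∈ ball (0 : ℂ) 1) (hz : z ∈ ball (0 : ℂ) 1) :
    mobius a z ∈ ball (0 : ℂ) 1 := by
  have hd := one_sub_conj_mul_ne_zero_of_mem_ball ha hz
  rw [mem_ball_zero_iff] at *
  rw [mobius, norm_div, div_lt_one (norm_pos_iff.2 hd), norm_sub_rev]
  refine lt_of_pow_lt_pow_left₀ 2 (norm_nonneg _) ?_
  rw [norm_one_sub_conj_mul_sq z a]
  have : 0 < (1 - ‖z‖ ^ 2) * (1 - ‖a‖ ^ 2) :=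
    mul_pos (by nlinarith [norm_nonneg z]) (by nlinarith [norm_nonneg a])
  linarith

theorem mapsTo_mobius {a : ℂ} (ha : a ∈ ball (0 : ℂ) 1) :
    MapsTo (mobius a) (ball 0 1) (ball 0 1) := fun _ hz => mobius_mem_ball ha hz

theorem mobius_mobius {a z : ℂ} (ha : a ∈ ball (0 : ℂ) 1) (hz : z ∈ ball (0 : ℂ) 1) :
    mobius a (mobius a z) = z := by
  have hd := one_sub_conj_mul_ne_zero_of_mem_ball ha hz
  have haa := one_sub_conj_mul_ne_zero_of_mem_ball ha ha
  have hnum : a - mobius a z = z * (1 - conj a * a) / (1 - conj a * z) := by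
    rw [mobius, eq_div_iff hd, sub_mul, div_mul_cancel₀ _ hd]; ring
  have hden : 1 - conj a * mobius a z = (1 - conj a * a) / (1 - conj a * z) := by
    rw [mobius, eq_div_iff hd, sub_mul, mul_assoc, div_mul_cancel₀ _ hd]; ring
  rw [mobius, hnum, hden, div_div_div_cancel_right₀ hd, mul_div_cancel_right₀ _ haa]

theorem hasDerivAt_mobius {a z : ℂ} (hz : 1 - conj a * z ≠ 0) :
    HasDerivAt (mobius a) ((conj a * a - 1) / (1 - conj a * z) ^ 2) z := by
  have h := ((hasDerivAt_id' z).const_sub a).div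
    (((hasDerivAt_id' z).const_mul (conj a)).const_sub 1) hz
  exact h.congr_deriv (by ring)

theorem differentiableOn_mobius {a : ℂ} (ha : a ∈ ball (0 : ℂ) 1) :
    DifferentiableOn ℂ (mobius a) (ball 0 1) := fun _ hz =>
  (hasDerivAt_mobius (one_sub_conj_mul_ne_zero_of_mem_ball ha hz)).differentiableAt
    |>.differentiableWithinAt

theorem norm_deriv_mobius_comp_comp_mobius {φ : ℂ → ℂ} {w : ℂ} (hw : w ∈ ball (0 : ℂ) 1)
    (hφw : φ w ∈ ball (0 : ℂ) 1) (hφ : DifferentiableAt ℂ φ w) :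
    ‖deriv (mobius (φ w) ∘ φ ∘ mobius w) 0‖ = Dh φ w := by
  have h₀ : HasDerivAt (mobius w) (conj w * w - 1) 0 := by
    simpa using hasDerivAt_mobius (a := w) (z := 0) (by simp)
  have hφ' : HasDerivAt φ (deriv φ w) (mobius w 0) := by
    rw [mobius_zero_right]; exact hφ.hasDerivAt
  have h₁ : HasDerivAt (mobius (φ w))
      ((conj (φ w) * φ w - 1) / (1 - conj (φ w) * φ w) ^ 2) (φ (mobius w 0)) := by
    rw [mobius_zero_right]
    exact hasDerivAt_mobius (one_sub_conj_mul_ne_zero_of_mem_ball hφw hφw)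
  rw [(h₁.comp 0 (hφ'.comp 0 h₀)).deriv]
  rw [mem_ball_zero_iff] at hw hφw
  rw [norm_mul, norm_mul, norm_div, norm_pow, norm_sub_rev, norm_sub_rev (conj w * w),
    norm_one_sub_conj_mul_self hφw.le, norm_one_sub_conj_mul_self hw.le, Dh]
  have : 1 - ‖φ w‖ ^ 2 ≠ 0 := by nlinarith [norm_nonneg (φ w)]
  field_simp

theorem abs_norm_sub_norm_le_pdist_mul {a b : ℂ} (ha : ‖a‖ ≤ 1) (hb : ‖b‖ ≤ 1) :
    |‖a‖ - ‖b‖| ≤ pdist a b * (1 - ‖a‖ * ‖b‖) := by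
  have hD : 1 - ‖a‖ * ‖b‖ ≤ ‖1 - conj b * a‖ := by
    simpa [mul_comm] using norm_sub_norm_le (1 : ℂ) (conj b * a)
  rcases eq_or_ne (1 - conj b * a) 0 with h0 | h0
  · rw [h0, norm_zero] at hD
    have ha1 : ‖a‖ = 1 := by nlinarith [norm_nonneg a, norm_nonneg b]
    have hb1 : ‖b‖ = 1 := by nlinarith [norm_nonneg a, norm_nonneg b]
    simp [ha1, hb1]
  rw [pdist, norm_div, div_mul_eq_mul_div, le_div_iff₀ (norm_pos_iff.2 h0)]
  have hab : ‖a - b‖ ^ 2 = ‖1 - conj b * a‖ ^ 2 - (1 - ‖a‖ ^ 2) * (1 - ‖b‖ ^ 2) := by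
    linarith [norm_one_sub_conj_mul_sq a b]
  have hD2 : (1 - ‖a‖ * ‖b‖) ^ 2 ≤ ‖1 - conj b * a‖ ^ 2 :=
    pow_le_pow_left₀ (by nlinarith [norm_nonneg a, norm_nonneg b]) hD 2
  refine (pow_le_pow_iff_left₀ (by positivity) (mul_nonneg (norm_nonneg _)
    (by nlinarith [norm_nonneg a, norm_nonneg b])) two_ne_zero).1 ?_
  rw [mul_pow, mul_pow, hab, sq_abs]
  have hP : 0 ≤ (1 - ‖a‖ ^ 2) * (1 - ‖b‖ ^ 2) :=
    mul_nonneg (by nlinarith [norm_nonneg a]) (by nlinarith [norm_nonneg b])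
  nlinarith [mul_le_mul_of_nonneg_left hD2 hP]

theorem pdist_le_norm_of_mapsTo_closedBall {g : ℂ → ℂ} {u : ℂ}
    (hg : DifferentiableOn ℂ g (ball 0 1)) (hmaps : MapsTo g (ball 0 1) (closedBall 0 1))
    (hu : u ∈ ball (0 : ℂ) 1) : pdist (g u) (g 0) ≤ ‖u‖ := by
  have h0 : (0 : ℂ) ∈ ball (0 : ℂ) 1 := mem_ball_self one_pos
  by_cases hopen : MapsTo g (ball 0 1) (ball 0 1)
  · rw [pdist_eq_norm_mobius]
    exact Complex.norm_le_norm_of_mapsTo_ball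
      ((differentiableOn_mobius (hopen h0)).comp hg hopen)
      (((mapsTo_mobius (hopen h0)).comp hopen).mono_right ball_subset_closedBall)
      (mobius_self _) (mem_ball_zero_iff.1 hu)
  · obtain ⟨v, hv, hgv⟩ : ∃ v ∈ ball (0 : ℂ) 1, g v ∉ ball (0 : ℂ) 1 := by
      simpa [MapsTo] using hopen
    rw [mem_ball_zero_iff, not_lt] at hgv
    have hmax : IsMaxOn (norm ∘ g) (ball 0 1) v := fun x hx =>
      (mem_closedBall_zero_iff.1 (hmaps hx)).trans hgv
    have hconst := Complex.eqOn_of_isPreconnected_of_isMaxOn_norm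
      (convex_ball (0 : ℂ) 1).isPreconnected isOpen_ball hg hv hmax
    rw [(hconst hu).trans (hconst h0).symm, pdist_self]
    exact norm_nonneg u

theorem mapsTo_dslope_zero_closedBall {ψ : ℂ → ℂ} (hψ : DifferentiableOn ℂ ψ (ball 0 1))
    (hmaps : MapsTo ψ (ball 0 1) (ball 0 1)) (hψ0 : ψ 0 = 0) :
    MapsTo (dslope ψ 0) (ball 0 1) (closedBall 0 1) := fun _ hv =>
  mem_closedBall_zero_iff.2 <| by
    simpa using Complex.norm_dslope_le_div_of_mapsTo_ball hψ
      (by rw [hψ0]; exact hmaps.mono_right ball_subset_closedBall) hv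

theorem abs_norm_dslope_sub_norm_deriv_le {ψ : ℂ → ℂ} {u : ℂ}
    (hψ : DifferentiableOn ℂ ψ (ball 0 1)) (hmaps : MapsTo ψ (ball 0 1) (ball 0 1))
    (hψ0 : ψ 0 = 0) (hu : u ∈ ball (0 : ℂ) 1) :
    |‖dslope ψ 0 u‖ - ‖deriv ψ 0‖| ≤ ‖u‖ * (1 - ‖dslope ψ 0 u‖ * ‖deriv ψ 0‖) := by
  have hg := (Complex.differentiableOn_dslope (ball_mem_nhds (0 : ℂ) one_pos)).2 hψ
  have hgmaps := mapsTo_dslope_zero_closedBall hψ hmaps hψ0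
  have hgu := mem_closedBall_zero_iff.1 (hgmaps hu)
  have hg0 := mem_closedBall_zero_iff.1 (hgmaps (mem_ball_self one_pos))
  rw [← dslope_same]
  calc _ ≤ pdist (dslope ψ 0 u) (dslope ψ 0 0) * (1 - ‖dslope ψ 0 u‖ * ‖dslope ψ 0 0‖) :=
        abs_norm_sub_norm_le_pdist_mul hgu hg0
    _ ≤ _ := mul_le_mul_of_nonneg_right (pdist_le_norm_of_mapsTo_closedBall hg hgmaps hu)
        (sub_nonneg.2 (mul_le_one₀ hgu (norm_nonneg _) hg0))

theorem refined_schwarz_pick (φ : ℂ → ℂ)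
    (hφ : DifferentiableOn ℂ φ (ball (0:ℂ) 1))
    (hmap : MapsTo φ (ball (0:ℂ) 1) (ball (0:ℂ) 1))
    (w : ℂ) (hw : w ∈ ball (0:ℂ) 1) :
    ∀ z ∈ ball (0:ℂ) 1,
      Real.exp (-(hdist z w)) * Real.sinh (hdist z w) * (1 - Dh φ w)
          ≤ hdist z w - hdist (φ z) (φ w)
      ∧ hdist z w - hdist (φ z) (φ w)
          ≤ Real.exp (hdist z w) * Real.sinh (hdist z w) * (1 - Dh φ w) := by
  intro z hz
  have hφw := hmap hw
  set ψ := mobius (φ w) ∘ φ ∘ mobius w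
  have hψ : DifferentiableOn ℂ ψ (ball 0 1) := (differentiableOn_mobius hφw).comp
    (hφ.comp (differentiableOn_mobius hw) (mapsTo_mobius hw)) (hmap.comp (mapsTo_mobius hw))
  have hψmaps : MapsTo ψ (ball 0 1) (ball 0 1) :=
    (mapsTo_mobius hφw).comp (hmap.comp (mapsTo_mobius hw))
  have hψ0 : ψ 0 = 0 := by simp [ψ, mobius_zero_right, mobius_self]
  set u := mobius w z
  have hu : u ∈ ball (0 : ℂ) 1 := mobius_mem_ball hw hz
  have hψu : ψ u = u * dslope ψ 0 u := by simpa [hψ0] using (sub_smul_dslope ψ 0 u).symm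
  have hρφ : pdist (φ z) (φ w) = ‖dslope ψ 0 u‖ * ‖u‖ := by
    rw [pdist_eq_norm_mobius, ← mobius_mobius hw hz, mul_comm, ← norm_mul, ← hψu]; rfl
  have key := abs_le.1 (abs_norm_dslope_sub_norm_deriv_le hψ hψmaps hψ0 hu)
  have ht₁ := mem_closedBall_zero_iff.1 (mapsTo_dslope_zero_closedBall hψ hψmaps hψ0 hu)
  have hρ₁ := mem_ball_zero_iff.1 hu
  have hρ₀ : -1 < ‖u‖ := by linarith [norm_nonneg u]
  rw [hdist, hdist, pdist_eq_norm_mobius z w, hρφ, ← norm_deriv_mobius_comp_comp_mobius hw hφw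
    (hφ.differentiableAt (isOpen_ball.mem_nhds hw)), Real.exp_neg_mul_sinh_log_one_add_div_one_sub
    hρ₀ hρ₁, Real.exp_mul_sinh_log_one_add_div_one_sub hρ₀ hρ₁]
  exact ⟨Real.two_mul_div_one_add_sq_mul_le_log_sub (norm_nonneg _) hρ₁ (norm_nonneg _) ht₁ key.2,
    Real.log_sub_le_two_mul_div_one_sub_sq_mul (norm_nonneg _) hρ₁ (norm_nonneg _) ht₁
      (by linarith [key.1])⟩
end

section
/- Let F : ℍ → ℍ be holomorphic on the right half-plane and suppose the limit F'(∞) := lim_{x→+∞} F(x)/x along the positive real axis exists and is a positive real number. Then ∫₁^∞ (1 - D_h F(x)) dx/x < +∞, where D_h F(x) = x|F'(x)|/Re F(x). -/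
/-!
The Schwarz–Pick lemma, i.e. Schwarz's lemma conjugated by Möbius maps between the half-plane
and the disc, gives `x |F'(x)| ≤ Re F(x)`. Writing `u = Re F` on the real axis, this yields
`0 ≤ (1 - D_h F(x)) / x ≤ 1 / x - u'(x) / u(x) = (log x - log u(x))'`, and the right-hand side
integrates over `(1, ∞)` to `log u(1) - log F'(∞) < ∞`.
-/

open Set MeasureTheory Filter

/-- The right half-plane. -/
def HalfPlane : Set ℂ := {z : ℂ | 0 < z.re}

/-- Hyperbolic distortion of a self-map of the right half-plane. -/
noncomputable def DhH (F : ℂ → ℂ) (ζ : ℂ) : ℝ :=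
  ζ.re / (F ζ).re * ‖deriv F ζ‖

open Metric Topology ComplexConjugate

lemma isOpen_halfPlane : IsOpen HalfPlane :=
  isOpen_lt continuous_const Complex.continuous_re

lemma ofReal_mem_halfPlane {x : ℝ} (hx : 0 < x) : (x : ℂ) ∈ HalfPlane := by
  simpa [HalfPlane] using hx

lemma add_conj_ne_zero {a w : ℂ} (ha : a ∈ HalfPlane) (hw : w ∈ HalfPlane) :
    w + conj a ≠ 0 := by
  intro h
  have := congrArg Complex.re h
  simp only [Complex.add_re, Complex.conj_re, Complex.zero_re] at this
  exact (add_pos hw ha).ne' this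

noncomputable def halfPlaneToDisc (a w : ℂ) : ℂ := (w - a) / (w + conj a)

noncomputable def discToHalfPlane (a z : ℂ) : ℂ := (a + conj a * z) / (1 - z)

lemma halfPlaneToDisc_self (a : ℂ) : halfPlaneToDisc a a = 0 := by
  simp [halfPlaneToDisc]

lemma norm_halfPlaneToDisc_lt_one {a w : ℂ} (ha : a ∈ HalfPlane) (hw : w ∈ HalfPlane) :
    ‖halfPlaneToDisc a w‖ < 1 := by
  have hpos : 0 < ‖w + conj a‖ := norm_pos_iff.2 (add_conj_ne_zero ha hw)
  rw [halfPlaneToDisc, norm_div, div_lt_one hpos]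
  apply lt_of_pow_lt_pow_left₀ 2 hpos.le
  simp only [Complex.sq_norm, Complex.normSq_apply, Complex.sub_re, Complex.sub_im,
    Complex.add_re, Complex.add_im, Complex.conj_re, Complex.conj_im]
  -- the difference of the two sides is `4 * w.re * a.re`
  nlinarith [mul_pos (show 0 < w.re from hw) (show 0 < a.re from ha)]

lemma hasDerivAt_halfPlaneToDisc {a : ℂ} (ha : a ∈ HalfPlane) :
    HasDerivAt (halfPlaneToDisc a) (1 / (2 * a.re)) a := by
  have hne := add_conj_ne_zero ha ha
  refine (((hasDerivAt_id a).sub_const a).div ((hasDerivAt_id a).add_const (conj a))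
    hne).congr_deriv ?_
  have hre : (a.re : ℂ) ≠ 0 := Complex.ofReal_ne_zero.2 (ne_of_gt ha)
  simp only [id, sub_self, Complex.add_conj]
  field_simp
  push_cast
  ring

lemma differentiableOn_halfPlaneToDisc {a : ℂ} (ha : a ∈ HalfPlane) :
    DifferentiableOn ℂ (halfPlaneToDisc a) HalfPlane := fun _ hw =>
  ((differentiableAt_id.sub_const a).div (differentiableAt_id.add_const _)
    (add_conj_ne_zero ha hw)).differentiableWithinAt

lemma discToHalfPlane_zero (a : ℂ) : discToHalfPlane a 0 = a := by
  simp [discToHalfPlane]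

lemma one_sub_ne_zero_of_mem_ball {z : ℂ} (hz : z ∈ ball (0 : ℂ) 1) : 1 - z ≠ 0 := by
  rintro h
  rw [sub_eq_zero.1 h |>.symm, mem_ball_zero_iff, norm_one] at hz
  exact lt_irrefl _ hz

lemma discToHalfPlane_mem {a z : ℂ} (ha : a ∈ HalfPlane) (hz : z ∈ ball (0 : ℂ) 1) :
    discToHalfPlane a z ∈ HalfPlane := by
  have hz1 : z.re * z.re + z.im * z.im < 1 := by
    rw [← Complex.normSq_apply, ← Complex.sq_norm]
    nlinarith [norm_nonneg z, mem_ball_zero_iff.1 hz]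
  have hden : 0 < Complex.normSq (1 - z) := Complex.normSq_pos.2 (one_sub_ne_zero_of_mem_ball hz)
  show 0 < (discToHalfPlane a z).re
  rw [discToHalfPlane, Complex.div_re, ← add_div]
  refine div_pos ?_ hden
  simp only [Complex.add_re, Complex.add_im, Complex.mul_re, Complex.mul_im, Complex.sub_re,
    Complex.sub_im, Complex.conj_re, Complex.conj_im, Complex.one_re, Complex.one_im]
  -- the numerator is `a.re * (1 - ‖z‖ ^ 2)`
  nlinarith [show 0 < a.re from ha]

lemma hasDerivAt_discToHalfPlane (a : ℂ) :
    HasDerivAt (discToHalfPlane a) (2 * a.re) 0 := by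
  refine (((hasDerivAt_id (0 : ℂ)).const_mul (conj a) |>.const_add a).div
    ((hasDerivAt_id (0 : ℂ)).const_sub 1) (by simp)).congr_deriv ?_
  simp [add_comm _ a, Complex.add_conj]

lemma differentiableOn_discToHalfPlane (a : ℂ) :
    DifferentiableOn ℂ (discToHalfPlane a) (ball 0 1) := fun _ hz =>
  (((differentiableAt_id.const_mul _).const_add a).div (differentiableAt_id.const_sub 1)
    (one_sub_ne_zero_of_mem_ball hz)).differentiableWithinAt

/-- Schwarz–Pick lemma for the right half-plane. -/
theorem re_mul_norm_deriv_le_re {F : ℂ → ℂ} (hF : DifferentiableOn ℂ F HalfPlane)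
    (hmap : MapsTo F HalfPlane HalfPlane) {ζ : ℂ} (hζ : ζ ∈ HalfPlane) :
    ζ.re * ‖deriv F ζ‖ ≤ (F ζ).re := by
  have hFζ : F ζ ∈ HalfPlane := hmap hζ
  set g : ℂ → ℂ := halfPlaneToDisc (F ζ) ∘ F ∘ discToHalfPlane ζ with hg
  have hφ : MapsTo (discToHalfPlane ζ) (ball 0 1) HalfPlane := fun _ hz =>
    discToHalfPlane_mem hζ hz
  have hg_diff : DifferentiableOn ℂ g (ball 0 1) :=
    (differentiableOn_halfPlaneToDisc hFζ).comp
      (hF.comp (differentiableOn_discToHalfPlane ζ) hφ) (hmap.comp hφ)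
  have hg_maps : MapsTo g (ball 0 1) (closedBall (g 0) 1) := fun z hz => by
    rw [hg, Function.comp_apply, Function.comp_apply, discToHalfPlane_zero,
      halfPlaneToDisc_self, mem_closedBall_zero_iff]
    exact (norm_halfPlaneToDisc_lt_one hFζ (hmap (hφ hz))).le
  have hF' : HasDerivAt F (deriv F ζ) (discToHalfPlane ζ 0) := by
    rw [discToHalfPlane_zero]
    exact (hF.differentiableAt (isOpen_halfPlane.mem_nhds hζ)).hasDerivAt
  have hg' : HasDerivAt g (1 / (2 * (F ζ).re) * (deriv F ζ * (2 * ζ.re))) 0 := by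
    refine HasDerivAt.comp 0 ?_ (hF'.comp 0 (hasDerivAt_discToHalfPlane ζ))
    simpa only [Function.comp_apply, discToHalfPlane_zero] using hasDerivAt_halfPlaneToDisc hFζ
  have hschwarz := Complex.norm_deriv_le_div_of_mapsTo_ball hg_diff hg_maps one_pos
  have hζ' : 0 < ζ.re := hζ
  have hFζ' : 0 < (F ζ).re := hFζ
  rw [hg'.deriv, norm_mul, norm_mul, norm_div, norm_mul, norm_mul] at hschwarz
  simp only [norm_one, Complex.norm_ofNat, Complex.norm_real, Real.norm_eq_abs,
    abs_of_pos hζ', abs_of_pos hFζ'] at hschwarz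
  rw [div_one, div_mul_eq_mul_div, one_mul, div_le_one (by positivity)] at hschwarz
  nlinarith

lemma DhH_le_one {F : ℂ → ℂ} (hF : DifferentiableOn ℂ F HalfPlane)
    (hmap : MapsTo F HalfPlane HalfPlane) {ζ : ℂ} (hζ : ζ ∈ HalfPlane) : DhH F ζ ≤ 1 := by
  rw [DhH, div_mul_eq_mul_div, div_le_one (hmap hζ)]
  exact re_mul_norm_deriv_le_re hF hmap hζ

theorem integrableOn_Ioi_inv_sub_logDeriv {u u' : ℝ → ℝ} {a L : ℝ} (ha : 0 < a) (hL : 0 < L)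
    (hu : ∀ x ∈ Ici a, HasDerivAt u (u' x) x) (hpos : ∀ x ∈ Ici a, 0 < u x)
    (hle : ∀ x ∈ Ioi a, x * u' x ≤ u x) (hlim : Tendsto (fun x => u x / x) atTop (𝓝 L)) :
    IntegrableOn (fun x => x⁻¹ - u' x / u x) (Ioi a) := by
  have hderiv : ∀ x ∈ Ici a,
      HasDerivAt (fun x => Real.log x - Real.log (u x)) (x⁻¹ - u' x / u x) x := fun x hx =>
    (Real.hasDerivAt_log (ha.trans_le hx).ne').sub ((hu x hx).log (hpos x hx).ne')
  have hnonneg : ∀ x ∈ Ioi a, 0 ≤ x⁻¹ - u' x / u x := fun x hx => by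
    have hx0 : 0 < x := ha.trans hx
    rw [sub_nonneg, div_le_iff₀ (hpos x (mem_Ici_of_Ioi hx)), inv_mul_eq_div, le_div_iff₀ hx0,
      mul_comm]
    exact hle x hx
  have htendsto : Tendsto (fun x => Real.log x - Real.log (u x)) atTop (𝓝 (-Real.log L)) := by
    refine ((Real.continuousAt_log hL.ne').tendsto.comp hlim).neg.congr' ?_
    filter_upwards [eventually_ge_atTop a] with x hx
    rw [Function.comp_apply, Real.log_div (hpos x hx).ne' (ha.trans_le hx).ne', neg_sub]
  exact integrableOn_Ioi_deriv_of_nonneg' hderiv hnonneg htendsto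

lemma continuousOn_DhH {F : ℂ → ℂ} (hF : DifferentiableOn ℂ F HalfPlane)
    (hmap : MapsTo F HalfPlane HalfPlane) : ContinuousOn (DhH F) HalfPlane :=
  (Complex.continuous_re.continuousOn.div
    (Complex.continuous_re.comp_continuousOn hF.continuousOn) fun _ hz => (hmap hz).ne').mul
    (continuous_norm.comp_continuousOn (hF.deriv isOpen_halfPlane).continuousOn)

lemma re_mul_re_deriv_div_le_DhH {F : ℂ → ℂ} {ζ : ℂ} (hζ : 0 ≤ ζ.re) (hFζ : 0 ≤ (F ζ).re) :
    ζ.re * (deriv F ζ).re / (F ζ).re ≤ DhH F ζ := by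
  rw [DhH, mul_div_right_comm]
  exact mul_le_mul_of_nonneg_left (Complex.re_le_norm _) (div_nonneg hζ hFζ)

lemma norm_one_sub_DhH_div_le {F : ℂ → ℂ} (hF : DifferentiableOn ℂ F HalfPlane)
    (hmap : MapsTo F HalfPlane HalfPlane) {x : ℝ} (hx : 0 < x) :
    ‖(1 - DhH F x) / x‖ ≤ x⁻¹ - (deriv F x).re / (F x).re := by
  have hxH := ofReal_mem_halfPlane hx
  have hlower := re_mul_re_deriv_div_le_DhH (F := F) (by simpa using hx.le) (hmap hxH).le
  rw [Complex.ofReal_re] at hlower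
  rw [Real.norm_eq_abs, abs_of_nonneg (div_nonneg (sub_nonneg.2 (DhH_le_one hF hmap hxH)) hx.le),
    div_le_iff₀ hx, sub_mul, inv_mul_cancel₀ hx.ne', mul_comm, ← mul_div_assoc]
  linarith

theorem angular_derivative_implies_integrability (F : ℂ → ℂ)
    (hF : DifferentiableOn ℂ F HalfPlane)
    (hmap : MapsTo F HalfPlane HalfPlane)
    (L : ℝ) (hL : 0 < L)
    (hlim : Tendsto (fun x : ℝ => F (x : ℂ) / (x : ℂ)) atTop (nhds (L : ℂ))) :
    IntegrableOn (fun x : ℝ => (1 - DhH F (x : ℂ)) / x) (Ioi (1:ℝ)) := by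
  have hmem (x : ℝ) (hx : x ∈ Ici 1) : (x : ℂ) ∈ HalfPlane :=
    ofReal_mem_halfPlane (one_pos.trans_le hx)
  have hderiv (x : ℝ) (hx : x ∈ Ici 1) :
      HasDerivAt (fun y : ℝ => (F y).re) (deriv F x).re x :=
    (hF.differentiableAt (isOpen_halfPlane.mem_nhds (hmem x hx))).hasDerivAt.real_of_complex
  have hre_lim : Tendsto (fun x : ℝ => (F x).re / x) atTop (𝓝 L) := by
    simpa only [Function.comp_def, Complex.div_ofReal_re, Complex.ofReal_re] using
      (Complex.continuous_re.tendsto _).comp hlim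
  have hle (x : ℝ) (hx : x ∈ Ioi 1) : x * (deriv F x).re ≤ (F x).re := by
    have := re_mul_norm_deriv_le_re hF hmap (hmem x (mem_Ici_of_Ioi hx))
    rw [Complex.ofReal_re] at this
    exact (mul_le_mul_of_nonneg_left (Complex.re_le_norm _) (zero_le_one.trans hx.le)).trans this
  refine (integrableOn_Ioi_inv_sub_logDeriv one_pos hL hderiv (fun x hx => hmap (hmem x hx))
    hle hre_lim).mono' ?_ ?_
  · refine ContinuousOn.aestronglyMeasurable ?_ measurableSet_Ioi
    exact (continuousOn_const.sub ((continuousOn_DhH hF hmap).comp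
      Complex.continuous_ofReal.continuousOn fun x hx => hmem x (mem_Ici_of_Ioi hx))).div
      continuousOn_id fun x hx => (zero_lt_one.trans hx).ne'
  · filter_upwards [ae_restrict_mem measurableSet_Ioi] with x hx
    exact norm_one_sub_DhH_div_le hF hmap (zero_lt_one.trans hx)
end

section
/- For a ∈ [0,1), let φ_a(z) = z(z-a)/(1-az) be the degree-two Blaschke product. Then the angular derivative modulus at 1 satisfies |φ_a'(1)| = 2/(1-a), while the integral I(φ_a,1) = ∫₀¹ (1 - D_h φ_a(r)) λ(r) dr equals log(1+a) + log 2. -/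
/-!
On the real segment, `φ_a` is real and `D_h φ_a(r) = |N(r)| / P(r)` with `N(r) = 2r - a(1 + r²)`
and `P(r) = r² - 2ar + 1`. Since `P + N = (1 - a)(1 + r)²` and `P - N = (1 + a)(1 - r)²`, the
integrand `(1 - D_h φ_a) λ` is a rational function on each side of the critical point
`r₀ = a / (1 + √(1 - a²))` of `φ_a`, with logarithmic antiderivatives `log (P / (1 - r)²)` and
`log ((1 + r)² / P)`. Summing the two pieces leaves `log ((P(r₀) / (1 - r₀²))² · 2 / (1 - a))`,
and `P(r₀) = √(1 - a²) (1 - r₀²)` turns this into `log (2 (1 + a))`.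
-/

open Metric Set MeasureTheory

noncomputable def blaschke2 (a z : ℂ) : ℂ := z * (z - a) / (1 - a * z)

theorem hasDerivAt_blaschke2 {a z : ℂ} (hz : 1 - a * z ≠ 0) :
    HasDerivAt (blaschke2 a) ((2 * z - a - a * z ^ 2) / (1 - a * z) ^ 2) z := by
  have hnum : HasDerivAt (fun z : ℂ => z * (z - a)) (2 * z - a) z :=
    ((hasDerivAt_id z).mul ((hasDerivAt_id z).sub_const a)).congr_deriv (by simp; ring)
  have hden : HasDerivAt (fun z : ℂ => 1 - a * z) (-a) z := by
    simpa using ((hasDerivAt_id z).const_mul a).const_sub 1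
  exact (hnum.div hden hz).congr_deriv (by ring)

theorem deriv_blaschke2_one {a : ℂ} (ha : a ≠ 1) : deriv (blaschke2 a) 1 = 2 / (1 - a) := by
  have h : 1 - a ≠ 0 := sub_ne_zero.mpr ha.symm
  rw [(hasDerivAt_blaschke2 (by rwa [mul_one])).deriv]
  field_simp
  ring

theorem sq_sub_two_mul_mul_add_one_pos {a : ℝ} (ha : |a| < 1) (r : ℝ) :
    0 < r ^ 2 - 2 * a * r + 1 := by
  nlinarith [sq_nonneg (r - a), sq_abs a, abs_nonneg a]

theorem hasDerivAt_sq_sub_two_mul_mul_add_one (a r : ℝ) :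
    HasDerivAt (fun r : ℝ => r ^ 2 - 2 * a * r + 1) (2 * r - 2 * a) r := by
  simpa using ((hasDerivAt_pow 2 r).sub ((hasDerivAt_id r).const_mul (2 * a))).add_const 1

theorem mul_lt_one_of_abs_lt_one_of_abs_le_one {a r : ℝ} (ha : |a| < 1) (hr : |r| ≤ 1) :
    a * r < 1 :=
  (le_abs_self _).trans_lt (abs_mul a r ▸ mul_lt_one_of_nonneg_of_lt_one_left (abs_nonneg a) ha hr)

theorem Dh_blaschke2_ofReal {a r : ℝ} (ha : |a| < 1) (hr : |r| < 1) :
    Dh (blaschke2 a) r = |2 * r - a * (1 + r ^ 2)| / (r ^ 2 - 2 * a * r + 1) := by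
  have har : 0 < 1 - a * r := by linarith [mul_lt_one_of_abs_lt_one_of_abs_le_one ha hr.le]
  have hr2 : 0 < 1 - r ^ 2 := by nlinarith [sq_abs r, abs_nonneg r]
  have hz : (1 : ℂ) - a * r = ((1 - a * r : ℝ) : ℂ) := by push_cast; ring
  have hval : blaschke2 a r = ((r * (r - a) / (1 - a * r) : ℝ) : ℂ) := by
    rw [blaschke2, hz]; push_cast; ring
  have hderiv :
      deriv (blaschke2 a) r = (((2 * r - a * (1 + r ^ 2)) / (1 - a * r) ^ 2 : ℝ) : ℂ) := by
    rw [(hasDerivAt_blaschke2 (hz ▸ Complex.ofReal_ne_zero.mpr har.ne')).deriv, hz]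
    push_cast; ring
  have hden : 1 - (r * (r - a) / (1 - a * r)) ^ 2 =
      (1 - r ^ 2) * ((r ^ 2 - 2 * a * r + 1) / (1 - a * r) ^ 2) := by
    rw [div_pow, one_sub_div (by positivity)]
    ring
  simp only [Dh, hval, hderiv, Complex.norm_real, Real.norm_eq_abs, sq_abs]
  rw [hden, abs_div, abs_of_pos (by positivity : 0 < (1 - a * r) ^ 2),
    mul_div_mul_left _ _ hr2.ne', div_div_div_cancel_right₀ (by positivity)]

noncomputable def angularIntegrand (φ : ℂ → ℂ) (r : ℝ) : ℝ := (1 - Dh φ r) * (2 / (1 - r ^ 2))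

-- `λ(1) = 2 / 0 = 0` in Lean.
theorem angularIntegrand_one (φ : ℂ → ℂ) : angularIntegrand φ 1 = 0 := by
  simp [angularIntegrand]

/-- The root `(1 - √(1 - a²)) / a` of `a r² - 2r + a`, written so that `a = 0` is allowed. -/
noncomputable def blaschke2CriticalPoint (a : ℝ) : ℝ := a / (1 + √(1 - a ^ 2))

section

variable {a : ℝ}

theorem angularIntegrand_blaschke2_of_nonpos {r : ℝ} (ha : |a| < 1) (hr : |r| < 1)
    (hN : 2 * r - a * (1 + r ^ 2) ≤ 0) :
    angularIntegrand (blaschke2 a) r =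
      2 * (1 - a) * (1 + r) / ((1 - r) * (r ^ 2 - 2 * a * r + 1)) := by
  have hP := sq_sub_two_mul_mul_add_one_pos ha r
  have h1 : 0 < 1 - r := by linarith [le_abs_self r]
  have h2 : 0 < 1 + r := by linarith [neg_abs_le r]
  have hr2 : 0 < 1 - r ^ 2 := by nlinarith
  rw [angularIntegrand, Dh_blaschke2_ofReal ha hr, abs_of_nonpos hN, one_sub_div hP.ne',
    div_mul_div_comm, div_eq_div_iff (by positivity) (by positivity)]
  ring

theorem angularIntegrand_blaschke2_of_nonneg {r : ℝ} (ha : |a| < 1) (hr : |r| < 1)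
    (hN : 0 ≤ 2 * r - a * (1 + r ^ 2)) :
    angularIntegrand (blaschke2 a) r =
      2 * (1 + a) * (1 - r) / ((1 + r) * (r ^ 2 - 2 * a * r + 1)) := by
  have hP := sq_sub_two_mul_mul_add_one_pos ha r
  have h1 : 0 < 1 - r := by linarith [le_abs_self r]
  have h2 : 0 < 1 + r := by linarith [neg_abs_le r]
  have hr2 : 0 < 1 - r ^ 2 := by nlinarith
  rw [angularIntegrand, Dh_blaschke2_ofReal ha hr, abs_of_nonneg hN, one_sub_div hP.ne',
    div_mul_div_comm, div_eq_div_iff (by positivity) (by positivity)]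
  ring

theorem hasDerivAt_log_div_one_sub_sq {r : ℝ} (ha : |a| < 1) (hr : r ≠ 1) :
    HasDerivAt (fun r => Real.log ((r ^ 2 - 2 * a * r + 1) / (1 - r) ^ 2))
      (2 * (1 - a) * (1 + r) / ((1 - r) * (r ^ 2 - 2 * a * r + 1))) r := by
  have hP := sq_sub_two_mul_mul_add_one_pos ha r
  have h1 : 1 - r ≠ 0 := sub_ne_zero.mpr hr.symm
  have hden : HasDerivAt (fun r : ℝ => (1 - r) ^ 2) (-(2 * (1 - r))) r := by
    simpa using ((hasDerivAt_id r).const_sub 1).fun_pow 2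
  have hq := (hasDerivAt_sq_sub_two_mul_mul_add_one a r).fun_div hden (pow_ne_zero 2 h1)
  refine (hq.log (div_ne_zero hP.ne' (pow_ne_zero 2 h1))).congr_deriv ?_
  field_simp
  ring

theorem hasDerivAt_log_one_add_sq_div {r : ℝ} (ha : |a| < 1) (hr : r ≠ -1) :
    HasDerivAt (fun r => Real.log ((1 + r) ^ 2 / (r ^ 2 - 2 * a * r + 1)))
      (2 * (1 + a) * (1 - r) / ((1 + r) * (r ^ 2 - 2 * a * r + 1))) r := by
  have hP := sq_sub_two_mul_mul_add_one_pos ha r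
  have h1 : 1 + r ≠ 0 := by contrapose! hr; linarith
  have hnum : HasDerivAt (fun r : ℝ => (1 + r) ^ 2) (2 * (1 + r)) r := by
    simpa using ((hasDerivAt_id r).const_add 1).fun_pow 2
  have hq := hnum.fun_div (hasDerivAt_sq_sub_two_mul_mul_add_one a r) hP.ne'
  refine (hq.log (div_ne_zero (pow_ne_zero 2 h1) hP.ne')).congr_deriv ?_
  field_simp
  ring

theorem blaschke2CriticalPoint_nonneg (ha : 0 ≤ a) : 0 ≤ blaschke2CriticalPoint a := by
  unfold blaschke2CriticalPoint; positivity

theorem abs_blaschke2CriticalPoint_lt_one (ha : |a| < 1) : |blaschke2CriticalPoint a| < 1 := by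
  have hs : 0 < 1 + √(1 - a ^ 2) := by positivity
  rw [blaschke2CriticalPoint, abs_div, abs_of_pos hs, div_lt_one hs]
  linarith [Real.sqrt_nonneg (1 - a ^ 2)]

theorem sq_sqrt_one_sub_sq (ha : |a| ≤ 1) : √(1 - a ^ 2) ^ 2 = 1 - a ^ 2 :=
  Real.sq_sqrt (by nlinarith [sq_abs a, abs_nonneg a])

theorem one_add_sqrt_mul_two_mul_sub_eq (ha : |a| ≤ 1) (r : ℝ) :
    (1 + √(1 - a ^ 2)) * (2 * r - a * (1 + r ^ 2)) =
      ((1 + √(1 - a ^ 2)) * r - a) * ((1 + √(1 - a ^ 2)) - a * r) := by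
  linear_combination (-r) * sq_sqrt_one_sub_sq ha

theorem blaschke2CriticalPoint_sq_sub_two_mul_mul_add_one (ha : |a| ≤ 1) :
    blaschke2CriticalPoint a ^ 2 - 2 * a * blaschke2CriticalPoint a + 1 =
      √(1 - a ^ 2) * (1 - blaschke2CriticalPoint a ^ 2) := by
  set s := √(1 - a ^ 2)
  set r₀ := blaschke2CriticalPoint a
  have hs : 0 < 1 + s := by positivity
  have hr₀ : (1 + s) * r₀ = a := mul_div_cancel₀ a hs.ne'
  refine mul_left_cancel₀ hs.ne' ?_
  linear_combination ((1 + s) * r₀ - a) * hr₀ - sq_sqrt_one_sub_sq ha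

theorem two_mul_sub_nonpos_of_le_blaschke2CriticalPoint {r : ℝ} (ha : |a| < 1) (hr : |r| ≤ 1)
    (hr₀ : r ≤ blaschke2CriticalPoint a) : 2 * r - a * (1 + r ^ 2) ≤ 0 := by
  have hs : 0 < 1 + √(1 - a ^ 2) := by positivity
  have h1 : (1 + √(1 - a ^ 2)) * r - a ≤ 0 := by
    rw [blaschke2CriticalPoint, le_div_iff₀ hs] at hr₀; linarith
  have h2 : 0 < (1 + √(1 - a ^ 2)) - a * r := by
    linarith [mul_lt_one_of_abs_lt_one_of_abs_le_one ha hr, Real.sqrt_nonneg (1 - a ^ 2)]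
  nlinarith [one_add_sqrt_mul_two_mul_sub_eq ha.le r]

theorem two_mul_sub_nonneg_of_blaschke2CriticalPoint_le {r : ℝ} (ha : |a| < 1) (hr : |r| ≤ 1)
    (hr₀ : blaschke2CriticalPoint a ≤ r) : 0 ≤ 2 * r - a * (1 + r ^ 2) := by
  have hs : 0 < 1 + √(1 - a ^ 2) := by positivity
  have h1 : 0 ≤ (1 + √(1 - a ^ 2)) * r - a := by
    rw [blaschke2CriticalPoint, div_le_iff₀ hs] at hr₀; linarith
  have h2 : 0 < (1 + √(1 - a ^ 2)) - a * r := by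
    linarith [mul_lt_one_of_abs_lt_one_of_abs_le_one ha hr, Real.sqrt_nonneg (1 - a ^ 2)]
  nlinarith [one_add_sqrt_mul_two_mul_sub_eq ha.le r]

theorem integral_angularIntegrand_blaschke2_of_le_blaschke2CriticalPoint (ha : |a| < 1) {b : ℝ}
    (hb0 : 0 ≤ b) (hb : b ≤ blaschke2CriticalPoint a) :
    IntervalIntegrable (angularIntegrand (blaschke2 a)) volume 0 b ∧
      ∫ r in 0..b, angularIntegrand (blaschke2 a) r =
        Real.log ((b ^ 2 - 2 * a * b + 1) / (1 - b) ^ 2) := by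
  have hb1 : b < 1 := hb.trans_lt (abs_lt.1 (abs_blaschke2CriticalPoint_lt_one ha)).2
  have heq : EqOn (angularIntegrand (blaschke2 a))
      (fun r => 2 * (1 - a) * (1 + r) / ((1 - r) * (r ^ 2 - 2 * a * r + 1))) (Icc 0 b) := by
    rintro r ⟨hr0, hrb⟩
    have hr : |r| < 1 := abs_lt.2 ⟨by linarith, by linarith⟩
    exact angularIntegrand_blaschke2_of_nonpos ha hr
      (two_mul_sub_nonpos_of_le_blaschke2CriticalPoint ha hr.le (hrb.trans hb))
  have hcont : ContinuousOn (angularIntegrand (blaschke2 a)) (Icc 0 b) := by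
    refine ContinuousOn.congr ?_ heq
    refine ContinuousOn.div (by fun_prop) (by fun_prop) fun r hr => ?_
    have := sq_sub_two_mul_mul_add_one_pos ha r
    have : 0 < 1 - r := by linarith [hr.2]
    positivity
  have hderiv : ∀ r ∈ Icc 0 b,
      HasDerivAt (fun r => Real.log ((r ^ 2 - 2 * a * r + 1) / (1 - r) ^ 2))
      (angularIntegrand (blaschke2 a) r) r := fun r hr =>
    (hasDerivAt_log_div_one_sub_sq ha (by linarith [hr.2])).congr_deriv (heq hr).symm
  rw [← uIcc_of_le hb0] at hcont hderiv
  refine ⟨hcont.intervalIntegrable, ?_⟩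
  rw [intervalIntegral.integral_eq_sub_of_hasDerivAt hderiv hcont.intervalIntegrable]
  norm_num

theorem integral_angularIntegrand_blaschke2_of_blaschke2CriticalPoint_le (ha : |a| < 1) {b : ℝ}
    (hb : blaschke2CriticalPoint a ≤ b) (hb1 : b ≤ 1) :
    IntervalIntegrable (angularIntegrand (blaschke2 a)) volume b 1 ∧
      ∫ r in b..1, angularIntegrand (blaschke2 a) r =
        Real.log (2 / (1 - a)) - Real.log ((1 + b) ^ 2 / (b ^ 2 - 2 * a * b + 1)) := by
  have hb0 : -1 < b := (abs_lt.1 (abs_blaschke2CriticalPoint_lt_one ha)).1.trans_le hb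
  have ha1 : 0 < 1 - a := by linarith [le_abs_self a]
  have heq : EqOn (angularIntegrand (blaschke2 a))
      (fun r => 2 * (1 + a) * (1 - r) / ((1 + r) * (r ^ 2 - 2 * a * r + 1))) (Icc b 1) := by
    rintro r ⟨hbr, hr1⟩
    rcases hr1.eq_or_lt with rfl | hr1
    · simp [angularIntegrand_one]
    have hr : |r| < 1 := abs_lt.2 ⟨by linarith, hr1⟩
    exact angularIntegrand_blaschke2_of_nonneg ha hr
      (two_mul_sub_nonneg_of_blaschke2CriticalPoint_le ha hr.le (hb.trans hbr))
  have hcont : ContinuousOn (angularIntegrand (blaschke2 a)) (Icc b 1) := by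
    refine ContinuousOn.congr ?_ heq
    refine ContinuousOn.div (by fun_prop) (by fun_prop) fun r hr => ?_
    have := sq_sub_two_mul_mul_add_one_pos ha r
    have : 0 < 1 + r := by linarith [hr.1]
    positivity
  have hderiv : ∀ r ∈ Icc b 1,
      HasDerivAt (fun r => Real.log ((1 + r) ^ 2 / (r ^ 2 - 2 * a * r + 1)))
      (angularIntegrand (blaschke2 a) r) r := fun r hr =>
    (hasDerivAt_log_one_add_sq_div ha (by linarith [hr.1])).congr_deriv (heq hr).symm
  rw [← uIcc_of_le hb1] at hcont hderiv
  refine ⟨hcont.intervalIntegrable, ?_⟩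
  rw [intervalIntegral.integral_eq_sub_of_hasDerivAt hderiv hcont.intervalIntegrable]
  congr 2
  rw [div_eq_div_iff (by linarith) ha1.ne']
  ring

theorem integral_angularIntegrand_blaschke2 (ha0 : 0 ≤ a) (ha1 : a < 1) :
    ∫ r in Ioo (0 : ℝ) 1, angularIntegrand (blaschke2 a) r = Real.log (1 + a) + Real.log 2 := by
  have ha : |a| < 1 := abs_lt.2 ⟨by linarith, ha1⟩
  have hr₀ := abs_lt.1 (abs_blaschke2CriticalPoint_lt_one ha)
  obtain ⟨hint₁, hI₁⟩ := integral_angularIntegrand_blaschke2_of_le_blaschke2CriticalPoint ha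
    (blaschke2CriticalPoint_nonneg ha0) le_rfl
  obtain ⟨hint₂, hI₂⟩ :=
    integral_angularIntegrand_blaschke2_of_blaschke2CriticalPoint_le ha le_rfl hr₀.2.le
  rw [← integral_Ioc_eq_integral_Ioo, ← intervalIntegral.integral_of_le zero_le_one,
    ← intervalIntegral.integral_add_adjacent_intervals hint₁ hint₂, hI₁, hI₂]
  have hP₀ := blaschke2CriticalPoint_sq_sub_two_mul_mul_add_one ha.le
  generalize blaschke2CriticalPoint a = r₀ at hr₀ hP₀ ⊢
  have hP₀pos := sq_sub_two_mul_mul_add_one_pos ha r₀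
  have h1 : 0 < 1 - r₀ := by linarith
  have h2 : 0 < 1 + r₀ := by linarith
  have h3 : 0 < 1 - a := by linarith
  rw [← Real.log_mul (by positivity) (by positivity), ← add_sub_assoc,
    ← Real.log_mul (by positivity) (by positivity), ← Real.log_div (by positivity) (by positivity)]
  have hr₀2 : 1 - r₀ ^ 2 ≠ 0 := by nlinarith
  congr 1
  calc _ = ((r₀ ^ 2 - 2 * a * r₀ + 1) / (1 - r₀ ^ 2)) ^ 2 * (2 / (1 - a)) := by
        field_simp; ring
    _ = (1 + a) * 2 := by
        rw [hP₀, mul_div_cancel_right₀ _ hr₀2, sq_sqrt_one_sub_sq ha.le]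
        field_simp; ring

end

theorem blaschke_example (a : ℝ) (ha0 : 0 ≤ a) (ha1 : a < 1)
    (φ : ℂ → ℂ) (hφ : ∀ z : ℂ, φ z = z * (z - (a : ℂ)) / (1 - (a : ℂ) * z)) :
    ‖deriv φ 1‖ = 2 / (1 - a)
    ∧ (∫ r in Ioo (0:ℝ) 1, (1 - Dh φ (r : ℂ)) * (2 / (1 - r ^ 2)))
        = Real.log (1 + a) + Real.log 2 := by
  obtain rfl : φ = blaschke2 a := funext hφ
  refine ⟨?_, integral_angularIntegrand_blaschke2 ha0 ha1⟩
  have hcast : (2 : ℂ) / (1 - a) = ((2 / (1 - a) : ℝ) : ℂ) := by push_cast; rfl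
  rw [deriv_blaschke2_one (by exact_mod_cast ha1.ne), hcast, Complex.norm_real,
    Real.norm_of_nonneg (div_nonneg zero_le_two (by linarith))]
end
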